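/- Let K be a field with char K = p > 0 and let n > p. In K[[α]], the potentials W = αⁿ and W' = αⁿ + α^p have equal formal derivatives (namely nα^{n−1}), yet there is no continuous K-algebra automorphism φ of K[[α]] and no c ∈ K^× with φ(c·αⁿ) = αⁿ + α^p. -/

import Mathlib

open PowerSeries

/-- over a field `K` of characteristic `p > 0` and `n > p`, the
potentials `W = αⁿ` and `W' = αⁿ + α^p` in `K⟦α⟧` have equal formal
derivatives (namely `nα^{n−1}`), yet there is no continuous `K`-algebra
automorphism `φ` of `K⟦α⟧` (continuity is encoded by `φ` preserving the
maximal ideal, i.e. `constantCoeff (φ α) = 0`) and no `c ∈ Kˣ` with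
`φ(c·αⁿ) = αⁿ + α^p`. -/
theorem not_right_equivalent_potentials
    {K : Type*} [Field K] (p : ℕ) [CharP K p] (hp : 0 < p)
    (n : ℕ) (hn : p < n) :
    derivativeFun ((X : K⟦X⟧) ^ n) = derivativeFun ((X : K⟦X⟧) ^ n + X ^ p) ∧
    derivativeFun ((X : K⟦X⟧) ^ n) = (n : K⟦X⟧) * X ^ (n - 1) ∧
    ¬ ∃ (φ : K⟦X⟧ ≃ₐ[K] K⟦X⟧) (c : Kˣ),
        constantCoeff (φ X) = 0 ∧
        φ ((c : K) • (X : K⟦X⟧) ^ n) = X ^ n + X ^ p := by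
  have hdp : derivativeFun ((X : K⟦X⟧) ^ p) = 0 := by
    rw [← Polynomial.coe_X (R := K), ← Polynomial.coe_pow,
      (show ∀ f : Polynomial K, derivativeFun (f : K⟦X⟧) = ((Polynomial.derivative f : Polynomial K) : K⟦X⟧)
        from fun f => derivative_coe f),
      Polynomial.derivative_X_pow]
    simp [CharP.cast_eq_zero K p]
  refine ⟨by rw [derivativeFun_add, hdp, add_zero], ?_, ?_⟩
  · rw [← Polynomial.coe_X (R := K), ← Polynomial.coe_pow,
      (show ∀ f : Polynomial K, derivativeFun (f : K⟦X⟧) = ((Polynomial.derivative f : Polynomial K) : K⟦X⟧)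
        from fun f => derivative_coe f),
      Polynomial.derivative_X_pow]
    push_cast
    rw [mul_comm, ← map_natCast (C (R := K)) n, mul_comm]
  · rintro ⟨φ, c, h0, heq⟩
    have hdvd : (X : K⟦X⟧) ∣ φ X := X_dvd_iff.mpr h0
    have hdvdn : (X : K⟦X⟧) ^ n ∣ (φ X) ^ n := pow_dvd_pow_of_dvd hdvd n
    have hc : coeff p ((φ X) ^ n) = 0 := (X_pow_dvd_iff.mp hdvdn) p hn
    rw [map_smul, map_pow] at heq
    have := congrArg (coeff p) heq
    rw [map_smul, hc, smul_zero, map_add, coeff_X_pow, coeff_X_pow,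
      if_neg hn.ne, if_pos rfl] at this
    simp at this
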